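/- Let G be a group containing a finite normal subgroup F such that G/F is a free abelian group of rank k ≥ 2. Then G contains a subgroup isomorphic to ℤ × ℤ. -/
import Mathlib

theorem stmt_5 {G : Type*} [Group G] (F : Subgroup G) [F.Normal] (hF : Finite F)
    (k : ℕ) (hk : 2 ≤ k) (e : (G ⧸ F) ≃* Multiplicative (Fin k → ℤ)) :
    ∃ H : Subgroup G, Nonempty (H ≃* Multiplicative (ℤ × ℤ)) := by
  -- indices
  have h0 : 0 < k := by omega
  have h1 : 1 < k := by omega
  set i0 : Fin k := ⟨0, h0⟩
  set i1 : Fin k := ⟨1, h1⟩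
  have hi01 : i0 ≠ i1 := by simp [i0, i1, Fin.ext_iff]
  -- quotient map
  set q : G →* Multiplicative (Fin k → ℤ) :=
    e.toMonoidHom.comp (QuotientGroup.mk' F) with hq
  have hqsurj : Function.Surjective (QuotientGroup.mk' F) := QuotientGroup.mk'_surjective F
  obtain ⟨a, ha⟩ := hqsurj (e.symm (Multiplicative.ofAdd (Pi.single i0 1)))
  obtain ⟨b0, hb0⟩ := hqsurj (e.symm (Multiplicative.ofAdd (Pi.single i1 1)))
  have hqa : q a = Multiplicative.ofAdd (Pi.single i0 1) := by
    have h' := congrArg e ha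
    rw [MulEquiv.apply_symm_apply] at h'
    simpa [hq] using h'
  have hqb0 : q b0 = Multiplicative.ofAdd (Pi.single i1 1) := by
    have h' := congrArg e hb0
    rw [MulEquiv.apply_symm_apply] at h'
    simpa [hq] using h'
  -- n-th power of b0 centralizes F
  have : Finite (MulAut F) :=
    Finite.of_injective (fun f : MulAut F => f.toEquiv) (fun f g h =>
      MulEquiv.toEquiv_injective h)
  set n : ℕ := Nat.card (MulAut F) with hn
  have hnpos : 0 < n := Nat.card_pos
  set b : G := b0 ^ n with hb
  have hbF : ∀ x ∈ F, b * x * b⁻¹ = x := by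
    intro x hx
    have h : MulAut.conjNormal (H := F) b0 ^ Nat.card (MulAut F) = 1 := pow_card_eq_one'
    have h2 : MulAut.conjNormal (H := F) b ⟨x, hx⟩ = ⟨x, hx⟩ := by
      rw [hb, map_pow, hn, h]; rfl
    have := congrArg Subtype.val h2
    rwa [MulAut.conjNormal_apply] at this
  -- commutator
  set z : G := a * b * a⁻¹ * b⁻¹ with hz
  have hzF : z ∈ F := by
    have hq1 : q z = 1 := by
      rw [hz]
      simp only [map_mul, map_inv]
      have : ∀ u v : Multiplicative (Fin k → ℤ), u * v * u⁻¹ * v⁻¹ = 1 := by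
        intro u v; rw [mul_comm u v]; group
      exact this _ _
    have hker : z ∈ q.ker := hq1
    rw [hq] at hker
    simpa [MonoidHom.mem_ker, QuotientGroup.eq_one_iff] using hker
  set m : ℕ := Nat.card F with hm
  have hmpos : 0 < m := Nat.card_pos
  have hzm : z ^ m = 1 := by
    have h : (⟨z, hzF⟩ : F) ^ m = 1 := by rw [hm]; exact pow_card_eq_one'
    simpa using congrArg Subtype.val h
  have hzb : Commute z b := by
    have h := hbF z hzF
    show z * b = b * z
    calc z * b = (b * z * b⁻¹) * b := by rw [h]
      _ = b * z := by group
  -- A = a, B = b^m commute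
  set B : G := b ^ m with hB
  have hc : Commute a B := by
    have key : a * B * a⁻¹ = B := by
      have h1 : a * b * a⁻¹ = z * b := by rw [hz]; group
      calc a * B * a⁻¹ = (a * b * a⁻¹) ^ m := by rw [hB, conj_pow]
        _ = (z * b) ^ m := by rw [h1]
        _ = z ^ m * b ^ m := hzb.mul_pow m
        _ = B := by rw [hzm, one_mul, hB]
    show a * B = B * a
    calc a * B = (a * B * a⁻¹) * a := by group
      _ = B * a := by rw [key]
  -- the homomorphism ℤ × ℤ → G
  set ψ : Multiplicative (ℤ × ℤ) →* G := MonoidHom.mk'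
    (fun x => a ^ x.toAdd.1 * B ^ x.toAdd.2)
    (by
      intro x y
      show a ^ (x.toAdd.1 + y.toAdd.1) * B ^ (x.toAdd.2 + y.toAdd.2)
        = a ^ x.toAdd.1 * B ^ x.toAdd.2 * (a ^ y.toAdd.1 * B ^ y.toAdd.2)
      rw [zpow_add, zpow_add]
      exact (hc.zpow_zpow y.toAdd.1 x.toAdd.2).mul_mul_mul_comm _ _) with hψ
  have hψinj : Function.Injective ψ := by
    rw [← MonoidHom.ker_eq_bot_iff, eq_bot_iff]
    intro x hx
    simp only [MonoidHom.mem_ker, hψ, MonoidHom.mk'_apply] at hx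
    have hqx : q (a ^ x.toAdd.1 * B ^ x.toAdd.2) = 1 := by rw [hx, map_one]
    rw [map_mul, map_zpow, map_zpow, hB, hb, map_pow, map_pow, hqa, hqb0] at hqx
    have hadd := congrArg Multiplicative.toAdd hqx
    simp only [toAdd_mul, toAdd_zpow, toAdd_pow, toAdd_ofAdd, toAdd_one] at hadd
    have h0' := congrFun hadd i0
    have h1' := congrFun hadd i1
    simp only [Pi.add_apply, Pi.smul_apply, Pi.zero_apply, Pi.single_apply,
      if_pos rfl, if_neg hi01, if_neg (Ne.symm hi01), smul_eq_mul, mul_one, mul_zero,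
      add_zero, zero_add] at h0' h1'
    have hi : x.toAdd.1 = 0 := by simpa using h0'
    have hj : x.toAdd.2 = 0 := by
      have hjz : x.toAdd.2 * (m * n) = 0 := by
        simpa [mul_comm, mul_assoc, mul_left_comm] using h1'
      rcases mul_eq_zero.mp hjz with h | h
      · exact h
      · exfalso
        have : ((m : ℤ) * n) ≠ 0 := by positivity
        exact this h
    show x ∈ (⊥ : Subgroup (Multiplicative (ℤ × ℤ)))
    rw [Subgroup.mem_bot]
    have hx0 : x.toAdd = 0 := Prod.ext hi hj
    exact Multiplicative.toAdd.injective hx0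
  exact ⟨ψ.range, ⟨(MonoidHom.ofInjective hψinj).symm⟩⟩
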